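/- arXiv:2602.16734 — 9 statements merged into one kernel-verified Lean document; each statement's English description precedes it below -/
import Mathlib

section
/- If voters' preferences are single-peaked with respect to a linear order on the candidates and the number of voters is odd, then there exists a Condorcet winner, i.e., a candidate who strictly defeats every other candidate in a pairwise majority comparison. -/
open Finset

/-- Each voter's preference is a strict total (linear) order on the candidates. -/
def StrictPrefs {m N : ℕ} (P : Fin N → Fin m → Fin m → Prop) : Prop :=
  ∀ v : Fin N, IsStrictTotalOrder (Fin m) (P v)

/-- Single-peakedness w.r.t. the left-right order on `Fin m`: for `i < j < k`,
no voter ranks both `C_i` and `C_k` above `C_j`. -/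
def SinglePeaked {m N : ℕ} (P : Fin N → Fin m → Fin m → Prop) : Prop :=
  ∀ (v : Fin N) (i j k : Fin m), i < j → j < k → ¬ (P v i j ∧ P v k j)

/-- Number of voters preferring `a` to `b`. -/
def prefCount {m N : ℕ} (P : Fin N → Fin m → Fin m → Prop)
    [∀ v a b, Decidable (P v a b)] (a b : Fin m) : ℕ :=
  (univ.filter fun v => P v a b).card

/-- `a` majority-defeats `b`: strictly more than `N/2` voters prefer `a` to `b`. -/
def Defeats {m N : ℕ} (P : Fin N → Fin m → Fin m → Prop)
    [∀ v a b, Decidable (P v a b)] (a b : Fin m) : Prop :=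
  2 * prefCount P a b > N

instance {m N : ℕ} (P : Fin N → Fin m → Fin m → Prop)
    [∀ v a b, Decidable (P v a b)] (a b : Fin m) : Decidable (Defeats P a b) :=
  inferInstanceAs (Decidable (2 * prefCount P a b > N))

/-- Voter `v` approves candidate `a` under Bloc voting with `k` winners:
`a` is among `v`'s top `k` candidates. -/
def Approves {m N : ℕ} (P : Fin N → Fin m → Fin m → Prop)
    [∀ v a b, Decidable (P v a b)] (k : ℕ) (v : Fin N) (a : Fin m) : Prop :=
  (univ.filter fun b => P v b a).card < k

instance {m N : ℕ} (P : Fin N → Fin m → Fin m → Prop)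
    [∀ v a b, Decidable (P v a b)] (k : ℕ) (v : Fin N) (a : Fin m) :
    Decidable (Approves P k v a) :=
  inferInstanceAs (Decidable ((univ.filter fun b => P v b a).card < k))

/-- Bloc score of candidate `a`: the number of voters who approve `a`. -/
def blocScore {m N : ℕ} (P : Fin N → Fin m → Fin m → Prop)
    [∀ v a b, Decidable (P v a b)] (k : ℕ) (a : Fin m) : ℕ :=
  (univ.filter fun v => Approves P k v a).card

/-- `W` is a winning set under Bloc voting with `k` winners (strict vote totals):
`W` has `k` members and each member has strictly more approvals than each non-member. -/
def IsWinningSet {m N : ℕ} (P : Fin N → Fin m → Fin m → Prop)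
    [∀ v a b, Decidable (P v a b)] (k : ℕ) (W : Finset (Fin m)) : Prop :=
  W.card = k ∧ ∀ w ∈ W, ∀ c ∉ W, blocScore P k w > blocScore P k c

/-!
Every voter has a top candidate, their peak. Let `w` be a median of the peaks: at least half of
the voters have their peak at or left of `w`, and at least half at or right of it. By
single-peakedness, a voter whose peak lies at or right of `w` prefers `w` to every candidate left
of `w`, and symmetrically; since `N` is odd, "at least half" means a strict majority.
-/

section SinglePeak

variable {α : Type*} {r : α → α → Prop}

theorem exists_forall_ne_rel_of_isStrictTotalOrder [Finite α] [Nonempty α]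
    [IsStrictTotalOrder α r] : ∃ p, ∀ x, x ≠ p → r p x := by
  classical
  let := linearOrderOfSTO r
  obtain ⟨p, hp⟩ := Finite.exists_min (id : α → α)
  exact ⟨p, fun x hx => show p < x from (hp x).lt_of_ne hx.symm⟩

variable [LinearOrder α] [Std.Trichotomous r]
  (hsp : ∀ i j k : α, i < j → j < k → ¬ (r i j ∧ r k j))
  {p : α} (hp : ∀ x, x ≠ p → r p x)
include hsp hp

theorem rel_of_lt_of_le_peak {c w : α} (hcw : c < w) (hwp : w ≤ p) : r w c := by
  rcases hwp.eq_or_lt with rfl | hwp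
  · exact hp c hcw.ne
  rcases trichotomous_of r w c with h | h | h
  · exact h
  · exact absurd h hcw.ne'
  · exact absurd ⟨h, hp w hwp.ne⟩ (hsp c w p hcw hwp)

theorem rel_of_peak_le_of_lt {c w : α} (hpw : p ≤ w) (hwc : w < c) : r w c := by
  have : Std.Trichotomous (α := αᵒᵈ) r := ‹_›
  exact rel_of_lt_of_le_peak (α := αᵒᵈ) (fun i j k hij hjk h => hsp k j i hjk hij h.symm) hp
    hwc hpw

end SinglePeak

theorem exists_median {ι α : Type*} [Fintype ι] [Nonempty ι] [LinearOrder α] (f : ι → α) :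
    ∃ w, Fintype.card ι ≤ 2 * #{i | f i ≤ w} ∧
      Fintype.card ι ≤ 2 * #{i | w ≤ f i} := by
  classical
  set T := (univ.image f).filter fun x => Fintype.card ι ≤ 2 * #{i | f i ≤ x}
  have hT : T.Nonempty := by
    obtain ⟨i, hi⟩ := Finite.exists_max f
    refine ⟨f i, mem_filter.2 ⟨mem_image_of_mem f (mem_univ i), ?_⟩⟩
    simp only [hi, filter_true, card_univ]
    omega
  set w := T.min' hT
  refine ⟨w, (mem_filter.1 (T.min'_mem hT)).2, ?_⟩
  have hsplit : #{i | w ≤ f i} + #{i | f i < w} = Fintype.card ι := by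
    simpa only [not_le, card_univ] using
      card_filter_add_card_filter_not (s := univ) (fun i => w ≤ f i)
  rcases (univ.filter fun i => f i < w).eq_empty_or_nonempty with hempty | hne
  · rw [hempty, card_empty] at hsplit
    omega
  obtain ⟨j, hj, hmax⟩ := exists_max_image _ f hne
  have hjT : f j ∉ T := fun hmem => (T.min'_le _ hmem).not_gt (mem_filter.1 hj).2
  have hlt_le : #{i | f i < w} ≤ #{i | f i ≤ f j} :=
    card_le_card fun i hi => mem_filter.2 ⟨mem_univ i, hmax i hi⟩
  simp only [T, mem_filter, mem_image_of_mem f (mem_univ j), true_and, not_le] at hjT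
  omega

theorem defeats_of_le_two_mul_card {m N : ℕ} (P : Fin N → Fin m → Fin m → Prop)
    [∀ v a b, Decidable (P v a b)] (hN : Odd N) {a b : Fin m} (s : Finset (Fin N))
    (hs : N ≤ 2 * #s) (hpref : ∀ v ∈ s, P v a b) : Defeats P a b := by
  have : #s ≤ prefCount P a b :=
    card_le_card fun v hv => mem_filter.2 ⟨mem_univ v, hpref v hv⟩
  obtain ⟨t, rfl⟩ := hN
  unfold Defeats
  omega

/-- Single-peaked preferences with an odd number of voters admit a
Condorcet winner. -/
theorem condorcet_winner_exists {m N : ℕ} (P : Fin N → Fin m → Fin m → Prop)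
    [∀ v a b, Decidable (P v a b)] (hm : 0 < m)
    (hP : StrictPrefs P) (hSP : SinglePeaked P) (hN : Odd N) :
    ∃ w : Fin m, ∀ c : Fin m, c ≠ w → Defeats P w c := by
  have : Nonempty (Fin m) := ⟨⟨0, hm⟩⟩
  have : Nonempty (Fin N) := ⟨⟨0, hN.pos⟩⟩
  choose peak hpeak using fun v =>
    have := hP v; exists_forall_ne_rel_of_isStrictTotalOrder (r := P v)
  obtain ⟨w, hleft, hright⟩ := exists_median peak
  simp only [Fintype.card_fin] at hleft hright
  refine ⟨w, fun c hc => ?_⟩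
  rcases hc.lt_or_gt with hcw | hwc
  · refine defeats_of_le_two_mul_card P hN _ hright fun v hv => ?_
    have := hP v
    exact rel_of_lt_of_le_peak (hSP v) (hpeak v) hcw (mem_filter.1 hv).2
  · refine defeats_of_le_two_mul_card P hN _ hleft fun v hv => ?_
    have := hP v
    exact rel_of_peak_le_of_lt (hSP v) (hpeak v) (mem_filter.1 hv).2 hwc
end

section
/- If voters' preferences are single-peaked with respect to a linear order on the candidates and the number of voters is odd, then the pairwise majority relation on candidates is a strict linear order (i.e., it is a total, asymmetric, transitive relation), called the Condorcet ranking. -/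
open Finset

/- Single-peakedness makes every voter's preference fall off on both sides of the peak, so a
candidate between two others is preferred, by each voter, to the worse of the two; summing over
voters, a candidate between `x` and `z` beats `x` whenever `z` does. In a majority cycle the
middle candidate (in the left-right order) is beaten by one of its neighbours in the cycle,
which in turn is beaten by the other extreme, hence by the middle candidate: a contradiction. -/

theorem rel_swap_iff_not_rel_of_ne {α : Type*} {r : α → α → Prop} [IsStrictTotalOrder α r]
    {a b : α} (hab : a ≠ b) : r b a ↔ ¬ r a b :=
  ⟨asymm, fun h => by_contra fun h' => hab (Std.Trichotomous.trichotomous a b h h')⟩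

theorem mem_uIoo_rotate_of_pairwise_ne {α : Type*} [LinearOrder α] {a b c : α}
    (hab : a ≠ b) (hbc : b ≠ c) (hac : a ≠ c) :
    b ∈ Set.uIoo a c ∨ c ∈ Set.uIoo b a ∨ a ∈ Set.uIoo c b := by
  simp only [Set.uIoo_eq_union, Set.mem_union, Set.mem_Ioo]
  rcases hab.lt_or_gt with hab | hab <;> rcases hbc.lt_or_gt with hbc | hbc <;>
    rcases hac.lt_or_gt with hac | hac <;> tauto

section Majority

variable {m N : ℕ} {P : Fin N → Fin m → Fin m → Prop}

theorem SinglePeaked.not_rel_and_rel (hSP : SinglePeaked P) (v : Fin N) {x y z : Fin m}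
    (hy : y ∈ Set.uIoo x z) : ¬ (P v x y ∧ P v z y) := by
  rw [Set.uIoo_eq_union] at hy
  rcases hy with ⟨hxy, hyz⟩ | ⟨hzy, hyx⟩
  · exact hSP v x y z hxy hyz
  · exact fun h => hSP v z y x hzy hyx h.symm

theorem SinglePeaked.rel_of_mem_uIoo (hP : StrictPrefs P) (hSP : SinglePeaked P) (v : Fin N)
    {x y z : Fin m} (hy : y ∈ Set.uIoo x z) (hzx : P v z x) : P v y x := by
  have := hP v
  have hne : y ≠ x := fun h => Set.left_notMem_uIoo (h ▸ hy)
  by_contra hyx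
  have hxy : P v x y := (rel_swap_iff_not_rel_of_ne hne).2 hyx
  exact hSP.not_rel_and_rel v hy ⟨hxy, _root_.trans hzx hxy⟩

variable [∀ v a b, Decidable (P v a b)]

theorem prefCount_le_prefCount {a b c d : Fin m} (h : ∀ v, P v a b → P v c d) :
    prefCount P a b ≤ prefCount P c d :=
  card_le_card (monotone_filter_right _ fun v _ => h v)

theorem prefCount_add_prefCount_le (hP : StrictPrefs P) (a b : Fin m) :
    prefCount P a b + prefCount P b a ≤ N := by
  calc prefCount P a b + prefCount P b a
      ≤ #(univ.filter fun v => P v a b) + #(univ.filter fun v => ¬ P v a b) := by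
        refine Nat.add_le_add_left (card_le_card (monotone_filter_right _ fun v _ => ?_)) _
        have := hP v
        exact asymm
    _ = N := by rw [card_filter_add_card_filter_not, card_univ, Fintype.card_fin]

theorem prefCount_add_prefCount_of_ne (hP : StrictPrefs P) {a b : Fin m} (hab : a ≠ b) :
    prefCount P a b + prefCount P b a = N := by
  have hba : prefCount P b a = #(univ.filter fun v => ¬ P v a b) :=
    congrArg card (filter_congr fun v _ => by have := hP v; exact rel_swap_iff_not_rel_of_ne hab)
  rw [hba, prefCount, card_filter_add_card_filter_not, card_univ, Fintype.card_fin]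

theorem Defeats.not_defeats (hP : StrictPrefs P) {a b : Fin m} (h : Defeats P a b) :
    ¬ Defeats P b a := by
  have := prefCount_add_prefCount_le hP a b
  unfold Defeats at *
  omega

theorem Defeats.ne (hP : StrictPrefs P) {a b : Fin m} (h : Defeats P a b) : a ≠ b := by
  rintro rfl
  exact h.not_defeats hP h

theorem defeats_or_defeats (hP : StrictPrefs P) (hN : Odd N) {a b : Fin m} (hab : a ≠ b) :
    Defeats P a b ∨ Defeats P b a := by
  have := prefCount_add_prefCount_of_ne hP hab
  obtain ⟨t, rfl⟩ := hN
  unfold Defeats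
  omega

theorem Defeats.of_mem_uIoo (hP : StrictPrefs P) (hSP : SinglePeaked P) {x y z : Fin m}
    (hy : y ∈ Set.uIoo x z) (hzx : Defeats P z x) : Defeats P y x :=
  Nat.lt_of_lt_of_le hzx <| Nat.mul_le_mul_left 2 <|
    prefCount_le_prefCount fun v => hSP.rel_of_mem_uIoo hP v hy

theorem Defeats.not_defeats_of_mem_uIoo (hP : StrictPrefs P) (hSP : SinglePeaked P)
    {x y z : Fin m} (hzx : Defeats P z x) (hy : y ∈ Set.uIoo x z) : ¬ Defeats P x y :=
  fun hxy => hxy.not_defeats hP (hzx.of_mem_uIoo hP hSP hy)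

end Majority

/-- Under single-peaked preferences with an odd number of voters, the
pairwise majority relation is total, asymmetric, and transitive. -/
theorem majority_relation_strict_linear_order {m N : ℕ}
    (P : Fin N → Fin m → Fin m → Prop) [∀ v a b, Decidable (P v a b)]
    (hP : StrictPrefs P) (hSP : SinglePeaked P) (hN : Odd N) :
    (∀ a b : Fin m, a ≠ b → Defeats P a b ∨ Defeats P b a) ∧
    (∀ a b : Fin m, Defeats P a b → ¬ Defeats P b a) ∧
    (∀ a b c : Fin m, Defeats P a b → Defeats P b c → Defeats P a c) := by
  refine ⟨fun a b => defeats_or_defeats hP hN, fun a b h => h.not_defeats hP, ?_⟩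
  intro a b c hab hbc
  by_contra hac
  have hca : Defeats P c a :=
    (defeats_or_defeats hP hN fun h : a = c => hab.not_defeats hP (h ▸ hbc)).resolve_left hac
  rcases mem_uIoo_rotate_of_pairwise_ne (hab.ne hP) (hbc.ne hP) (hca.ne hP).symm with
    hb | hc | ha
  · exact hca.not_defeats_of_mem_uIoo hP hSP hb hab
  · exact hab.not_defeats_of_mem_uIoo hP hSP hc hbc
  · exact hbc.not_defeats_of_mem_uIoo hP hSP ha hca
end

section
/- Under single-peaked preferences with an odd number of voters, every Gehrlein-stable set of candidates consists of candidates that are adjacent in the left-right ordering (i.e., forms an interval of consecutive candidates). -/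
/-!
Two strict majorities of the same electorate share a voter. If `C_a < C_c < C_b` and both
`C_a` and `C_b` majority-defeat `C_c`, such a shared voter ranks `C_c` below a candidate on
each side of it, which single-peakedness forbids. So a candidate lying between two
members of a Gehrlein-stable set cannot be outside it.
-/

open Finset

theorem exists_voter_of_defeats_of_defeats {m N : ℕ}
    (P : Fin N → Fin m → Fin m → Prop) [∀ v a b, Decidable (P v a b)] {a b c : Fin m}
    (hac : Defeats P a c) (hbc : Defeats P b c) : ∃ v, P v a c ∧ P v b c := by
  have hcard : #(univ : Finset (Fin N)) < prefCount P a c + prefCount P b c := by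
    unfold Defeats at hac hbc
    rw [card_univ, Fintype.card_fin]
    omega
  obtain ⟨v, hv⟩ :=
    inter_nonempty_of_card_lt_card_add_card (subset_univ _) (subset_univ _) hcard
  exact ⟨v, by simpa using hv⟩

theorem SinglePeaked.not_defeats_of_lt_of_lt {m N : ℕ}
    {P : Fin N → Fin m → Fin m → Prop} [∀ v a b, Decidable (P v a b)] (hSP : SinglePeaked P)
    {a b c : Fin m} (hac : a < c) (hcb : c < b) (ha : Defeats P a c) : ¬ Defeats P b c :=
  fun hb => by
    obtain ⟨v, hv⟩ := exists_voter_of_defeats_of_defeats P ha hb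
    exact hSP v a c b hac hcb hv

theorem gehrlein_stable_adjacent_general {m N : ℕ}
    (P : Fin N → Fin m → Fin m → Prop) [∀ v a b, Decidable (P v a b)]
    (hSP : SinglePeaked P)
    (W : Finset (Fin m)) (hG : ∀ w ∈ W, ∀ c ∉ W, Defeats P w c) :
    ∀ a ∈ W, ∀ b ∈ W, ∀ c : Fin m, a ≤ c → c ≤ b → c ∈ W := by
  intro a ha b hb c hac hcb
  by_contra hc
  have hac' : a < c := hac.lt_of_ne (by rintro rfl; exact hc ha)
  have hcb' : c < b := hcb.lt_of_ne (by rintro rfl; exact hc hb)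
  exact hSP.not_defeats_of_lt_of_lt hac' hcb' (hG a ha c hc) (hG b hb c hc)

/-- Every Gehrlein-stable set is an interval of consecutive candidates
in the left-right ordering. -/
theorem gehrlein_stable_adjacent {m N : ℕ}
    (P : Fin N → Fin m → Fin m → Prop) [∀ v a b, Decidable (P v a b)]
    (hP : StrictPrefs P) (hSP : SinglePeaked P) (hN : Odd N)
    (W : Finset (Fin m)) (hG : ∀ w ∈ W, ∀ c ∉ W, Defeats P w c) :
    ∀ a ∈ W, ∀ b ∈ W, ∀ c : Fin m, a ≤ c → c ≤ b → c ∈ W :=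
  gehrlein_stable_adjacent_general P hSP W hG
end

section
/- Suppose there are m candidates linearly ordered and k winners are selected by Bloc voting (each voter approves their top k candidates, and the k candidates with the most approvals win) under single-peaked preferences. If candidate C_i with i ≤ k is a winner, then C_{i+1}, ..., C_k are all winners; symmetrically, if C_i with i ≥ m−k+1 is a winner, then C_{m-k+1}, ..., C_{i-1} are all winners. -/
open Finset

/-!
A voter's approved set is upward closed in their ranking and, by single-peakedness, an interval
of the left-right order; if it has fewer than `k` members, it contains every candidate. If `C_i`
is approved but `C_j` is not, with `i < j < k`, the interval lies left of `C_j`, so it has at most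
`j < k` members, a contradiction. Hence every voter approving `C_i` approves `C_j`, and `C_j`
scores at least as much as the winner `C_i`. The right end is the mirror image.
-/

section Approves

variable {m N : ℕ} (P : Fin N → Fin m → Fin m → Prop) [∀ v a b, Decidable (P v a b)]
  {k : ℕ} {v : Fin N}

theorem card_prefers_lt_card_prefers [IsStrictOrder (Fin m) (P v)] {a b : Fin m}
    (hba : P v b a) : #{x | P v x b} < #{x | P v x a} := by
  refine card_lt_card ((ssubset_iff_of_subset fun x hx => ?_).2 ⟨b, ?_, ?_⟩)
  · simp only [mem_filter, mem_univ, true_and] at hx ⊢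
    exact _root_.trans hx hba
  · simpa using hba
  · simpa using irrefl b

variable {P}

theorem Approves.of_prefers [IsStrictOrder (Fin m) (P v)] {a b : Fin m} (hba : P v b a)
    (ha : Approves P k v a) : Approves P k v b :=
  (card_prefers_lt_card_prefers P hba).trans ha

theorem approves_of_card_approves_lt [IsStrictOrder (Fin m) (P v)]
    (hcard : #{a | Approves P k v a} < k) (d : Fin m) : Approves P k v d := by
  by_contra hd
  obtain ⟨c, hc, hmin⟩ := exists_min_image {a | ¬ Approves P k v a}
    (fun a => #{x | P v x a}) ⟨d, by simpa using hd⟩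
  have hbetter : ({x | P v x c} : Finset (Fin m)) ⊆ ({a | Approves P k v a} : Finset _) := by
    intro x hx
    simp only [mem_filter, mem_univ, true_and] at hx ⊢
    by_contra hxc
    exact (card_prefers_lt_card_prefers P hx).not_ge (hmin x (by simpa using hxc))
  simp only [mem_filter, mem_univ, true_and] at hc
  exact hc ((card_le_card hbetter).trans_lt hcard)

theorem Approves.of_between [IsStrictTotalOrder (Fin m) (P v)] (hSP : SinglePeaked P)
    {a b c : Fin m} (hab : a < b) (hbc : b < c) (ha : Approves P k v a)
    (hc : Approves P k v c) : Approves P k v b := by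
  rcases trichotomous_of (P v) a b with hpa | rfl | hpb
  · rcases trichotomous_of (P v) b c with hpb | rfl | hpc
    · exact hc.of_prefers hpb
    · exact absurd hbc (lt_irrefl b)
    · exact absurd ⟨hpa, hpc⟩ (hSP v a b c hab hbc)
  · exact absurd hab (lt_irrefl a)
  · exact ha.of_prefers hpb

theorem Approves.of_lt_of_lt [IsStrictTotalOrder (Fin m) (P v)] (hSP : SinglePeaked P)
    {i j : Fin m} (hij : i < j) (hjk : (j : ℕ) < k) (hi : Approves P k v i) :
    Approves P k v j := by
  by_contra hj
  have hleft : ({a | Approves P k v a} : Finset (Fin m)) ⊆ Iio j := by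
    intro a ha
    simp only [mem_filter, mem_univ, true_and, mem_Iio] at ha ⊢
    by_contra! hja
    rcases hja.lt_or_eq with hja | rfl
    · exact hj (hi.of_between hSP hij hja ha)
    · exact hj ha
  refine hj (approves_of_card_approves_lt ?_ j)
  calc #{a | Approves P k v a} ≤ #(Iio j) := card_le_card hleft
    _ = j := Fin.card_Iio j
    _ < k := hjk

theorem Approves.of_lt_of_sub_le [IsStrictTotalOrder (Fin m) (P v)] (hSP : SinglePeaked P)
    {i j : Fin m} (hji : j < i) (hjk : m - k ≤ (j : ℕ)) (hi : Approves P k v i) :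
    Approves P k v j := by
  by_contra hj
  have hright : ({a | Approves P k v a} : Finset (Fin m)) ⊆ Ioi j := by
    intro a ha
    simp only [mem_filter, mem_univ, true_and, mem_Ioi] at ha ⊢
    by_contra! haj
    rcases haj.lt_or_eq with haj | rfl
    · exact hj (ha.of_between hSP haj hji hi)
    · exact hj ha
  refine hj (approves_of_card_approves_lt ?_ j)
  calc #{a | Approves P k v a} ≤ #(Ioi j) := card_le_card hright
    _ = m - 1 - j := Fin.card_Ioi j
    _ < k := by omega

theorem blocScore_le_blocScore {a b : Fin m}
    (hab : ∀ v, Approves P k v a → Approves P k v b) : blocScore P k a ≤ blocScore P k b :=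
  card_le_card fun v hv => by
    simp only [mem_filter, mem_univ, true_and] at hv ⊢
    exact hab v hv

theorem IsWinningSet.mem_of_blocScore_le {W : Finset (Fin m)} (hW : IsWinningSet P k W)
    {a b : Fin m} (ha : a ∈ W) (hab : blocScore P k a ≤ blocScore P k b) : b ∈ W := by
  by_contra hb
  exact (hW.2 a ha b hb).not_ge hab

end Approves

/-- Zero-indexed: `C_i` with `i ≤ k` (one-indexed) is `(i : ℕ) < k`, and `i ≥ m-k+1` is
`m - k ≤ (i : ℕ)`. -/
theorem bloc_winners_near_extremes {m N : ℕ}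
    (P : Fin N → Fin m → Fin m → Prop) [∀ v a b, Decidable (P v a b)]
    (hP : StrictPrefs P) (hSP : SinglePeaked P)
    (k : ℕ) (W : Finset (Fin m)) (hW : IsWinningSet P k W) :
    (∀ i ∈ W, (i : ℕ) < k → ∀ j : Fin m, i < j → (j : ℕ) < k → j ∈ W) ∧
    (∀ i ∈ W, m - k ≤ (i : ℕ) → ∀ j : Fin m, j < i → m - k ≤ (j : ℕ) → j ∈ W) := by
  constructor
  · intro i hi _ j hij hjk
    refine hW.mem_of_blocScore_le hi (blocScore_le_blocScore fun v hv => ?_)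
    have := hP v
    exact hv.of_lt_of_lt hSP hij hjk
  · intro i hi _ j hji hjk
    refine hW.mem_of_blocScore_le hi (blocScore_le_blocScore fun v hv => ?_)
    have := hP v
    exact hv.of_lt_of_sub_le hSP hji hjk
end

section
/- If preferences are single-peaked and the number of winners k satisfies k ≥ ⌈m/2⌉, then any Bloc-voting winning set (with strict vote totals, i.e., each winner has strictly more approvals than each non-winner) consists of adjacent candidates. -/
open Finset

/-!
Suppose `a < c < b` with `a, b ∈ W` and `c ∉ W`. Since `a` outscores `c`, some voter approves
`a` but not `c`; by single-peakedness her approved set is order-connected, so all `min k m` of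
her approved candidates lie left of `c`, giving `min k m ≤ c`. A voter approving `b` but not `c`
gives `min k m ≤ m - 1 - c` in the same way, and the two bounds contradict `m ≤ 2k`.
-/

section StrictRank

variable {α : Type*} [Fintype α] (r : α → α → Prop) [DecidableRel r]

def strictRank (x : α) : ℕ := #{y | r y x}

variable {r} [IsStrictTotalOrder α r]

theorem strictRank_lt_strictRank {x y : α} (h : r x y) : strictRank r x < strictRank r y := by
  classical
  have hx : x ∉ ({z | r z x} : Finset α) := by simpa using irrefl x
  have hsub : insert x ({z | r z x} : Finset α) ⊆ ({z | r z y} : Finset α) := by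
    intro z hz
    simp only [mem_insert, mem_filter, mem_univ, true_and] at hz ⊢
    rcases hz with rfl | hz
    exacts [h, _root_.trans hz h]
  simpa [strictRank, card_insert_of_notMem hx] using card_le_card hsub

theorem rel_of_strictRank_lt {x y : α} (h : strictRank r x < strictRank r y) : r x y := by
  rcases trichotomous_of r x y with hxy | rfl | hyx
  exacts [hxy, absurd h (lt_irrefl _), absurd (strictRank_lt_strictRank hyx) h.asymm]

theorem strictRank_injective : Function.Injective (strictRank r) := by
  intro x y hxy
  rcases trichotomous_of r x y with h | h | h
  exacts [absurd hxy (strictRank_lt_strictRank h).ne, h,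
    absurd hxy (strictRank_lt_strictRank h).ne']

theorem strictRank_lt_card (x : α) : strictRank r x < Fintype.card α := by
  classical
  have hx : x ∉ ({z | r z x} : Finset α) := by simpa using irrefl x
  exact card_lt_univ_of_notMem hx

theorem image_strictRank_univ : univ.image (strictRank r) = range (Fintype.card α) := by
  classical
  refine eq_of_subset_of_card_le (fun i hi => ?_) ?_
  · obtain ⟨x, -, rfl⟩ := mem_image.1 hi
    exact mem_range.2 (strictRank_lt_card x)
  · rw [card_range, card_image_of_injective _ strictRank_injective, card_univ]

theorem card_filter_strictRank_lt (k : ℕ) :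
    #{x | strictRank r x < k} = min k (Fintype.card α) := by
  classical
  have hrange : (range (Fintype.card α)).filter (· < k) = range (min k (Fintype.card α)) := by
    ext i; simp only [mem_filter, mem_range]; omega
  rw [← card_image_of_injective _ (strictRank_injective (r := r)),
    ← filter_image (p := (· < k)), image_strictRank_univ, hrange, card_range]

end StrictRank

section Bloc

variable {m N : ℕ} {P : Fin N → Fin m → Fin m → Prop} [∀ v a b, Decidable (P v a b)] {k : ℕ}

theorem approves_iff_strictRank_lt {v : Fin N} {a : Fin m} :
    Approves P k v a ↔ strictRank (P v) a < k :=
  Iff.rfl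

theorem card_filter_approves (hP : StrictPrefs P) (v : Fin N) :
    #{a | Approves P k v a} = min k m := by
  have := hP v
  exact (card_filter_strictRank_lt (r := P v) k).trans (by rw [Fintype.card_fin])

theorem ordConnected_setOf_approves (hP : StrictPrefs P) (hSP : SinglePeaked P) (v : Fin N) :
    {a | Approves P k v a}.OrdConnected := by
  have := hP v
  refine ⟨fun a ha b hb c ⟨hac, hcb⟩ => ?_⟩
  rcases hac.eq_or_lt with rfl | hac
  · exact ha
  rcases hcb.eq_or_lt with rfl | hcb
  · exact hb
  by_contra hc
  simp only [Set.mem_ofPred_eq, approves_iff_strictRank_lt, not_lt] at ha hb hc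
  exact hSP v a c b hac hcb
    ⟨rel_of_strictRank_lt (by omega), rel_of_strictRank_lt (by omega)⟩

theorem min_le_of_approves_of_not_approves (hP : StrictPrefs P) (hSP : SinglePeaked P)
    {v : Fin N} {a c : Fin m} (hac : a < c) (ha : Approves P k v a) (hc : ¬ Approves P k v c) :
    min k m ≤ c := by
  have hsub : ({x | Approves P k v x} : Finset (Fin m)) ⊆ Iio c := by
    intro x hx
    rw [mem_filter] at hx
    rw [mem_Iio]
    by_contra! hcx
    exact hc ((ordConnected_setOf_approves hP hSP v).out ha hx.2 ⟨hac.le, hcx⟩)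
  calc min k m = #{x | Approves P k v x} := (card_filter_approves hP v).symm
    _ ≤ #(Iio c) := card_le_card hsub
    _ = c := Fin.card_Iio c

theorem min_le_of_not_approves_of_approves (hP : StrictPrefs P) (hSP : SinglePeaked P)
    {v : Fin N} {b c : Fin m} (hcb : c < b) (hc : ¬ Approves P k v c) (hb : Approves P k v b) :
    min k m ≤ m - 1 - c := by
  have hsub : ({x | Approves P k v x} : Finset (Fin m)) ⊆ Ioi c := by
    intro x hx
    rw [mem_filter] at hx
    rw [mem_Ioi]
    by_contra! hxc
    exact hc ((ordConnected_setOf_approves hP hSP v).out hx.2 hb ⟨hxc, hcb.le⟩)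
  calc min k m = #{x | Approves P k v x} := (card_filter_approves hP v).symm
    _ ≤ #(Ioi c) := card_le_card hsub
    _ = m - 1 - c := Fin.card_Ioi c

theorem exists_approves_and_not_approves_of_blocScore_lt {a c : Fin m}
    (h : blocScore P k c < blocScore P k a) : ∃ v, Approves P k v a ∧ ¬ Approves P k v c := by
  by_contra! hall
  refine h.not_ge (card_le_card fun v hv => ?_)
  simp only [mem_filter, mem_univ, true_and] at hv ⊢
  exact hall v hv

end Bloc

/-- If `k ≥ ⌈m/2⌉`, any Bloc-voting winning set is an interval of
consecutive candidates. -/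
theorem bloc_winning_set_adjacent_of_large_k {m N : ℕ}
    (P : Fin N → Fin m → Fin m → Prop) [∀ v a b, Decidable (P v a b)]
    (hP : StrictPrefs P) (hSP : SinglePeaked P)
    (k : ℕ) (hk : (m + 1) / 2 ≤ k)
    (W : Finset (Fin m)) (hW : IsWinningSet P k W) :
    ∀ a ∈ W, ∀ b ∈ W, ∀ c : Fin m, a ≤ c → c ≤ b → c ∈ W := by
  intro a ha b hb c hac hcb
  by_contra hc
  obtain ⟨v, hva, hvc⟩ := exists_approves_and_not_approves_of_blocScore_lt (hW.2 a ha c hc)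
  obtain ⟨u, hub, huc⟩ := exists_approves_and_not_approves_of_blocScore_lt (hW.2 b hb c hc)
  have hleft := min_le_of_approves_of_not_approves hP hSP
    (hac.lt_of_ne (ne_of_mem_of_not_mem ha hc)) hva hvc
  have hright := min_le_of_not_approves_of_approves hP hSP
    (hcb.lt_of_ne (ne_of_mem_of_not_mem hb hc).symm) huc hub
  have := c.isLt
  omega
end

section
/- With five candidates A < B < C < D < E linearly ordered, single-peaked preferences, and Bloc voting with k = 2, the only possible winning sets (with strict vote totals) are {A,B}, {B,C}, {B,D}, {C,D}, and {D,E}; with k = 3 the only possible winning sets are {A,B,C}, {B,C,D}, and {C,D,E}. -/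
open Finset

section Aux
variable {N : ℕ} (P : Fin N → Fin 5 → Fin 5 → Prop) [∀ v a b, Decidable (P v a b)]

lemma approves_mono_left (hP : StrictPrefs P) (hSP : SinglePeaked P)
    {k : ℕ} (a b : Fin 5) (hab : a < b) (hb : (b : ℕ) < k) (v : Fin N)
    (h : Approves P k v a) : Approves P k v b := by
  haveI := hP v
  unfold Approves at *
  rcases trichotomous_of (P v) a b with hpab | heq | hpba
  · calc (univ.filter fun x => P v x b).card
        ≤ (Finset.Iio b).card := by
          apply Finset.card_le_card
          intro x hx
          simp only [Finset.mem_filter, Finset.mem_univ, true_and] at hx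
          rcases lt_trichotomy x b with hlt | heq' | hgt
          · simpa using hlt
          · exact absurd (heq' ▸ hx) (irrefl_of (P v) b)
          · exact absurd ⟨hpab, hx⟩ (hSP v a b x hab hgt)
      _ = (b : ℕ) := Fin.card_Iio b
      _ < k := hb
  · exact absurd heq (ne_of_lt hab)
  · calc (univ.filter fun x => P v x b).card
        ≤ (univ.filter fun x => P v x a).card := by
          apply Finset.card_le_card
          intro x hx
          simp only [Finset.mem_filter, Finset.mem_univ, true_and] at hx ⊢
          exact trans_of (P v) hx hpba
      _ < k := h

lemma approves_mono_right (hP : StrictPrefs P) (hSP : SinglePeaked P)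
    {k : ℕ} (a b : Fin 5) (hab : b < a) (hb : 4 - (b : ℕ) < k) (v : Fin N)
    (h : Approves P k v a) : Approves P k v b := by
  haveI := hP v
  unfold Approves at *
  rcases trichotomous_of (P v) a b with hpab | heq | hpba
  · calc (univ.filter fun x => P v x b).card
        ≤ (Finset.Ioi b).card := by
          apply Finset.card_le_card
          intro x hx
          simp only [Finset.mem_filter, Finset.mem_univ, true_and] at hx
          rcases lt_trichotomy x b with hlt | heq' | hgt
          · exact absurd ⟨hx, hpab⟩ (hSP v x b a hlt hab)
          · exact absurd (heq' ▸ hx) (irrefl_of (P v) b)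
          · simpa using hgt
      _ = 4 - (b : ℕ) := Fin.card_Ioi b
      _ < k := hb
  · exact absurd heq (ne_of_gt hab)
  · calc (univ.filter fun x => P v x b).card
        ≤ (univ.filter fun x => P v x a).card := by
          apply Finset.card_le_card
          intro x hx
          simp only [Finset.mem_filter, Finset.mem_univ, true_and] at hx ⊢
          exact trans_of (P v) hx hpba
      _ < k := h

lemma blocScore_mono {k : ℕ} (a b : Fin 5)
    (h : ∀ v : Fin N, Approves P k v a → Approves P k v b) :
    blocScore P k a ≤ blocScore P k b := by
  apply Finset.card_le_card
  intro v hv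
  simp only [Finset.mem_filter, Finset.mem_univ, true_and] at hv ⊢
  exact h v hv

lemma mem_implies {k : ℕ} {W : Finset (Fin 5)} (hW : IsWinningSet P k W)
    (a b : Fin 5) (hle : blocScore P k a ≤ blocScore P k b)
    (ha : a ∈ W) : b ∈ W := by
  by_contra hb
  exact absurd hle (not_le.mpr (hW.2 a ha b hb))

lemma enum2 : ∀ W : Finset (Fin 5), W.card = 2 → ((0 : Fin 5) ∈ W → (1 : Fin 5) ∈ W) →
    ((4 : Fin 5) ∈ W → (3 : Fin 5) ∈ W) →
    W = {0, 1} ∨ W = {1, 2} ∨ W = {1, 3} ∨ W = {2, 3} ∨ W = {3, 4} := by decide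

lemma enum3 : ∀ W : Finset (Fin 5), W.card = 3 → ((0 : Fin 5) ∈ W → (1 : Fin 5) ∈ W) →
    ((1 : Fin 5) ∈ W → (2 : Fin 5) ∈ W) → ((4 : Fin 5) ∈ W → (3 : Fin 5) ∈ W) →
    ((3 : Fin 5) ∈ W → (2 : Fin 5) ∈ W) →
    W = {0, 1, 2} ∨ W = {1, 2, 3} ∨ W = {2, 3, 4} := by decide

end Aux

/-- With five candidates `A < B < C < D < E`, the only possible Bloc
winning sets are `{A,B}, {B,C}, {B,D}, {C,D}, {D,E}` for `k = 2`, and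
`{A,B,C}, {B,C,D}, {C,D,E}` for `k = 3`. -/
theorem five_candidates_winning_sets {N : ℕ}
    (P : Fin N → Fin 5 → Fin 5 → Prop) [∀ v a b, Decidable (P v a b)]
    (hP : StrictPrefs P) (hSP : SinglePeaked P) :
    (∀ W : Finset (Fin 5), IsWinningSet P 2 W →
      W = {0, 1} ∨ W = {1, 2} ∨ W = {1, 3} ∨ W = {2, 3} ∨ W = {3, 4}) ∧
    (∀ W : Finset (Fin 5), IsWinningSet P 3 W →
      W = {0, 1, 2} ∨ W = {1, 2, 3} ∨ W = {2, 3, 4}) := by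
  constructor
  · intro W hW
    refine enum2 W hW.1 (mem_implies P hW 0 1 ?_) (mem_implies P hW 4 3 ?_)
    · exact blocScore_mono P 0 1 (fun v => approves_mono_left P hP hSP 0 1 (by decide) (by decide) v)
    · exact blocScore_mono P 4 3 (fun v => approves_mono_right P hP hSP 4 3 (by decide) (by decide) v)
  · intro W hW
    refine enum3 W hW.1 (mem_implies P hW 0 1 ?_) (mem_implies P hW 1 2 ?_)
      (mem_implies P hW 4 3 ?_) (mem_implies P hW 3 2 ?_)
    · exact blocScore_mono P 0 1 (fun v => approves_mono_left P hP hSP 0 1 (by decide) (by decide) v)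
    · exact blocScore_mono P 1 2 (fun v => approves_mono_left P hP hSP 1 2 (by decide) (by decide) v)
    · exact blocScore_mono P 4 3 (fun v => approves_mono_right P hP hSP 4 3 (by decide) (by decide) v)
    · exact blocScore_mono P 3 2 (fun v => approves_mono_right P hP hSP 3 2 (by decide) (by decide) v)
end

section
/- With five candidates A < B < C < D < E, single-peaked preferences, an odd number N of voters, and Bloc voting with k = 2: if the winning set is {B,D} (each with strictly more approvals than A, C, E), then the number of voters who prefer C to both B and D is strictly less than N/2 (so the winning set {B,D} is locally stable with majority quota). -/
open Finset

/-! Each voter approves exactly two candidates, and single-peakedness makes them adjacent on the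
axis: AB, BC, CD or DE. So every voter approves exactly one of B and D, and their Bloc scores add
up to N. A voter preferring C to both B and D ranks C above whichever of them they approve, so
approves C. Hence 2·#{such voters} ≤ 2·score C < score B + score D = N. -/

section Ranking

variable {m N : ℕ} (P : Fin N → Fin m → Fin m → Prop) [∀ v a b, Decidable (P v a b)]

def prefRank (v : Fin N) (a : Fin m) : ℕ := #{b | P v b a}

theorem approves_iff_prefRank_lt (k : ℕ) (v : Fin N) (a : Fin m) :
    Approves P k v a ↔ prefRank P v a < k := Iff.rfl

variable {P}

theorem prefRank_lt_prefRank {v : Fin N} (hv : IsStrictTotalOrder (Fin m) (P v)) {a b : Fin m}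
    (hab : P v a b) : prefRank P v a < prefRank P v b := by
  refine card_lt_card ⟨fun c hc => ?_, fun hsub => ?_⟩
  · simp only [mem_filter, mem_univ, true_and] at hc ⊢
    exact hv.trans _ _ _ hc hab
  · have := hsub (mem_filter.2 ⟨mem_univ a, hab⟩)
    simp only [mem_filter, mem_univ, true_and] at this
    exact hv.irrefl a this

theorem prefRank_lt_card {v : Fin N} (hv : IsStrictTotalOrder (Fin m) (P v)) (a : Fin m) :
    prefRank P v a < m := by
  have hsub : ({b | P v b a} : Finset (Fin m)) ⊂ univ :=
    filter_ssubset.2 ⟨a, mem_univ a, hv.irrefl a⟩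
  simpa [prefRank] using card_lt_card hsub

theorem prefRank_injective {v : Fin N} (hv : IsStrictTotalOrder (Fin m) (P v)) :
    Function.Injective (prefRank P v) := by
  have := hv
  intro a b h
  rcases trichotomous_of (P v) a b with hab | rfl | hba
  · exact absurd h (prefRank_lt_prefRank hv hab).ne
  · rfl
  · exact absurd h (prefRank_lt_prefRank hv hba).ne'

theorem approves_of_pref {v : Fin N} (hv : IsStrictTotalOrder (Fin m) (P v)) {k : ℕ}
    {a b : Fin m} (hab : P v a b) (hb : Approves P k v b) : Approves P k v a :=
  (prefRank_lt_prefRank hv hab).trans hb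

theorem card_approved {v : Fin N} (hv : IsStrictTotalOrder (Fin m) (P v)) {k : ℕ} (hk : k ≤ m) :
    #{a | Approves P k v a} = k := by
  let r : Fin m → Fin m := fun a => ⟨prefRank P v a, prefRank_lt_card hv a⟩
  have hr : r.Bijective := Finite.injective_iff_bijective.1 fun a b h =>
    prefRank_injective hv (Fin.val_eq_of_eq h)
  rw [card_bijective r hr (t := {i : Fin m | i < k}) (by simp [r, approves_iff_prefRank_lt]),
    Fin.card_filter_val_lt, min_eq_right hk]

theorem SinglePeaked.approves_of_between (hSP : SinglePeaked P) {v : Fin N}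
    (hv : IsStrictTotalOrder (Fin m) (P v)) {k : ℕ} {a b c : Fin m} (hab : a < b) (hbc : b < c)
    (ha : Approves P k v a) (hc : Approves P k v c) : Approves P k v b := by
  have := hv
  have hb : P v b a ∨ P v b c := by
    rcases trichotomous_of (P v) a b with h | rfl | h
    · rcases trichotomous_of (P v) c b with h' | rfl | h'
      · exact absurd ⟨h, h'⟩ (hSP v a b c hab hbc)
      · exact absurd hbc (lt_irrefl _)
      · exact Or.inr h'
    · exact absurd hab (lt_irrefl _)
    · exact Or.inl h
  rcases hb with h | h
  · exact approves_of_pref hv h ha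
  · exact approves_of_pref hv h hc

theorem blocScore_add_blocScore_eq {k : ℕ} {a b : Fin m}
    (h : ∀ v, Approves P k v a ↔ ¬ Approves P k v b) : blocScore P k a + blocScore P k b = N := by
  rw [blocScore, blocScore, filter_congr fun v _ => h v, add_comm,
    card_filter_add_card_filter_not, card_univ, Fintype.card_fin]

end Ranking

theorem mem_one_iff_not_mem_three_of_card_eq_two {S : Finset (Fin 5)} (hS : #S = 2)
    (hconv : ∀ a b c, a < b → b < c → a ∈ S → c ∈ S → b ∈ S) : 1 ∈ S ↔ 3 ∉ S := by
  revert S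
  decide

theorem SinglePeaked.approves_one_iff_not_approves_three {N : ℕ}
    {P : Fin N → Fin 5 → Fin 5 → Prop} [∀ v a b, Decidable (P v a b)] (hSP : SinglePeaked P)
    {v : Fin N}
    (hv : IsStrictTotalOrder (Fin 5) (P v)) : Approves P 2 v 1 ↔ ¬ Approves P 2 v 3 := by
  simpa using mem_one_iff_not_mem_three_of_card_eq_two (card_approved hv (by norm_num))
    fun a b c hab hbc ha hc => by
      simp only [mem_filter, mem_univ, true_and] at ha hc ⊢
      exact hSP.approves_of_between hv hab hbc ha hc

theorem five_candidates_BD_locally_stable_general {N : ℕ}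
    (P : Fin N → Fin 5 → Fin 5 → Prop) [∀ v a b, Decidable (P v a b)]
    (hP : StrictPrefs P) (hSP : SinglePeaked P)
    (hW : IsWinningSet P 2 ({1, 3} : Finset (Fin 5))) :
    2 * (univ.filter fun v => P v 2 1 ∧ P v 2 3).card < N := by
  have hBD : ∀ v, Approves P 2 v 1 ↔ ¬ Approves P 2 v 3 := fun v =>
    hSP.approves_one_iff_not_approves_three (hP v)
  have hsum := blocScore_add_blocScore_eq hBD
  have hC : #{v | P v 2 1 ∧ P v 2 3} ≤ blocScore P 2 2 := by
    refine card_le_card fun v hv => ?_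
    simp only [mem_filter, mem_univ, true_and] at hv ⊢
    by_cases hD : Approves P 2 v 3
    · exact approves_of_pref (hP v) hv.2 hD
    · exact approves_of_pref (hP v) hv.1 ((hBD v).2 hD)
  have hCB := hW.2 1 (by decide) 2 (by decide)
  have hCD := hW.2 3 (by decide) 2 (by decide)
  omega

/-- With five candidates `A < B < C < D < E` (indices `0,...,4`) and
Bloc voting with `k = 2`, if the winning set is `{B, D}` then fewer than `N/2`
voters prefer `C` to both `B` and `D`. -/
theorem five_candidates_BD_locally_stable {N : ℕ}
    (P : Fin N → Fin 5 → Fin 5 → Prop) [∀ v a b, Decidable (P v a b)]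
    (hP : StrictPrefs P) (hSP : SinglePeaked P) (hN : Odd N)
    (hW : IsWinningSet P 2 ({1, 3} : Finset (Fin 5))) :
    2 * (univ.filter fun v => P v 2 1 ∧ P v 2 3).card < N :=
  five_candidates_BD_locally_stable_general P hP hSP hW
end

section
/- With five candidates A < B < C < D < E, single-peaked preferences, an odd number N of voters, and Bloc voting with k = 3: any winning set of the form {A,B,C}, {B,C,D}, or {C,D,E} (each winner having strictly more approvals than each non-winner) is Gehrlein-stable. -/
/-! A single-peaked voter's top three candidates form an interval of the axis, so every ballot
is `{A,B,C}`, `{B,C,D}` or `{C,D,E}`. Hence the voters approving `D` are exactly those not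
approving `A`, and those approving `B` exactly those not approving `E`; so "`A` has more
approvals than `D`" says that the ballots `{A,B,C}` form a strict majority, and these voters rank
every winner above every loser (symmetrically for `{C,D,E}`). For `{B,C,D}`, "`D` has more
approvals than `A`" gives a majority ranking `D` above `A`, and single-peakedness lifts `B` and
`C` above `A` for the same voters; mirrored, the approvers of `B` rank `B`, `C`, `D` above `E`. -/

open Finset

open Function

section Rank

variable {α : Type*} [Fintype α] (r : α → α → Prop) [DecidableRel r]

def rank (a : α) : ℕ := #{b | r b a}

variable {r} [IsStrictTotalOrder α r]

theorem rank_lt_rank {a b : α} (h : r a b) : rank r a < rank r b := by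
  refine card_lt_card <| (ssubset_iff_of_subset fun x hx => ?_).2 ⟨a, ?_, ?_⟩
  · simp only [mem_filter, mem_univ, true_and] at hx ⊢
    exact _root_.trans hx h
  · simpa using h
  · simpa using irrefl a

theorem rank_injective : Injective (rank r) := by
  intro a b hab
  rcases trichotomous_of r a b with h | h | h
  · exact absurd hab (rank_lt_rank h).ne
  · exact h
  · exact absurd hab (rank_lt_rank h).ne'

theorem rank_lt_card (a : α) : rank r a < Fintype.card α :=
  card_lt_univ_of_notMem (x := a) (by simpa using irrefl a)

theorem image_rank_univ : univ.image (rank r) = range (Fintype.card α) :=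
  eq_of_subset_of_card_le (fun _ hx => by
      obtain ⟨a, -, rfl⟩ := mem_image.1 hx
      exact mem_range.2 (rank_lt_card a))
    (by rw [card_image_of_injective _ rank_injective, card_range, card_univ])

theorem card_filter_rank_lt {k : ℕ} (hk : k ≤ Fintype.card α) : #{a | rank r a < k} = k := by
  have hrange : (range (Fintype.card α)).filter (· < k) = range k := by
    ext; simp only [mem_filter, mem_range]; omega
  rw [← card_image_of_injective _ (rank_injective (r := r)), ← filter_image (p := (· < k)),
    image_rank_univ, hrange, card_range]

end Rank

section Bloc

variable {m N : ℕ} {P : Fin N → Fin m → Fin m → Prop}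

theorem SinglePeaked.prefers_of_lt_of_le (hSP : SinglePeaked P) (hP : StrictPrefs P)
    {v : Fin N} {a b c : Fin m} (hab : a < b) (hbc : b ≤ c) (h : P v c a) : P v b a := by
  have := hP v
  rcases hbc.lt_or_eq with hbc | rfl
  · rcases trichotomous_of (P v) b a with h' | rfl | h'
    · exact h'
    · exact absurd hab (lt_irrefl b)
    · exact absurd ⟨h', _root_.trans h h'⟩ (hSP v a b c hab hbc)
  · exact h

theorem SinglePeaked.prefers_of_le_of_lt (hSP : SinglePeaked P) (hP : StrictPrefs P)
    {v : Fin N} {a b c : Fin m} (hab : a ≤ b) (hbc : b < c) (h : P v a c) : P v b c := by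
  have := hP v
  rcases hab.lt_or_eq with hab | rfl
  · rcases trichotomous_of (P v) b c with h' | rfl | h'
    · exact h'
    · exact absurd hbc (lt_irrefl b)
    · exact absurd ⟨_root_.trans h h', h'⟩ (hSP v a b c hab hbc)
  · exact h

variable [∀ v a b, Decidable (P v a b)] {k : ℕ}

variable (P k) in
def ballot (v : Fin N) : Finset (Fin m) := {a | Approves P k v a}

theorem mem_ballot {v : Fin N} {a : Fin m} : a ∈ ballot P k v ↔ Approves P k v a := by
  simp [ballot]

theorem card_ballot (hP : StrictPrefs P) (hk : k ≤ m) (v : Fin N) : #(ballot P k v) = k := by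
  have := hP v
  exact card_filter_rank_lt (r := P v) (by simpa using hk)

theorem prefers_of_mem_ballot_of_notMem (hP : StrictPrefs P) {v : Fin N} {a b : Fin m}
    (ha : a ∈ ballot P k v) (hb : b ∉ ballot P k v) : P v a b := by
  have := hP v
  rw [mem_ballot] at ha hb
  rcases trichotomous_of (P v) a b with h | rfl | h
  · exact h
  · exact absurd ha hb
  · exact absurd (show rank (P v) b < k from (rank_lt_rank h).trans ha) hb

theorem SinglePeaked.mem_ballot_of_lt_of_lt (hSP : SinglePeaked P) (hP : StrictPrefs P)
    {v : Fin N} {a b c : Fin m} (hab : a < b) (hbc : b < c) (ha : a ∈ ballot P k v)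
    (hc : c ∈ ballot P k v) : b ∈ ballot P k v := by
  by_contra hb
  exact hSP v a b c hab hbc
    ⟨prefers_of_mem_ballot_of_notMem hP ha hb, prefers_of_mem_ballot_of_notMem hP hc hb⟩

theorem blocScore_add_blocScore_of_iff_not {a b : Fin m}
    (h : ∀ v, a ∈ ballot P k v ↔ b ∉ ballot P k v) :
    blocScore P k a + blocScore P k b = N := by
  simp only [mem_ballot] at h
  simpa [blocScore, h, add_comm] using
    card_filter_add_card_filter_not (s := univ) (fun v => Approves P k v b)

theorem defeats_of_forall_mem_ballot {a w c : Fin m} (hmaj : N < 2 * blocScore P k a)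
    (h : ∀ v, a ∈ ballot P k v → P v w c) : Defeats P w c := by
  have : blocScore P k a ≤ prefCount P w c :=
    card_le_card fun v hv => by simpa using h v (by simpa [mem_ballot] using hv)
  unfold Defeats; omega

end Bloc

theorem fin_five_eq_of_card_eq_three_of_convex {s : Finset (Fin 5)} (hs : #s = 3)
    (hconvex : ∀ a ∈ s, ∀ c ∈ s, ∀ b, a < b → b < c → b ∈ s) :
    s = {0, 1, 2} ∨ s = {1, 2, 3} ∨ s = {2, 3, 4} := by
  revert s; decide

theorem ballot_eq_of_five_candidates {N : ℕ} {P : Fin N → Fin 5 → Fin 5 → Prop}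
    [∀ v a b, Decidable (P v a b)] (hP : StrictPrefs P) (hSP : SinglePeaked P) (v : Fin N) :
    ballot P 3 v = {0, 1, 2} ∨ ballot P 3 v = {1, 2, 3} ∨ ballot P 3 v = {2, 3, 4} :=
  fin_five_eq_of_card_eq_three_of_convex (card_ballot hP (by norm_num) v)
    fun _ ha _ hc _ hab hbc => hSP.mem_ballot_of_lt_of_lt hP hab hbc ha hc

theorem five_candidates_three_winners_gehrlein_stable_general {N : ℕ}
    (P : Fin N → Fin 5 → Fin 5 → Prop) [∀ v a b, Decidable (P v a b)]
    (hP : StrictPrefs P) (hSP : SinglePeaked P)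
    (W : Finset (Fin 5))
    (hform : W = {0, 1, 2} ∨ W = {1, 2, 3} ∨ W = {2, 3, 4})
    (hW : IsWinningSet P 3 W) :
    ∀ w ∈ W, ∀ c ∉ W, Defeats P w c := by
  have hB := ballot_eq_of_five_candidates hP hSP
  have h03 : blocScore P 3 0 + blocScore P 3 3 = N :=
    blocScore_add_blocScore_of_iff_not fun v => by rcases hB v with h | h | h <;> simp [h]
  have h41 : blocScore P 3 4 + blocScore P 3 1 = N :=
    blocScore_add_blocScore_of_iff_not fun v => by rcases hB v with h | h | h <;> simp [h]
  intro w hw c hc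
  rcases hform with rfl | rfl | rfl
  · have hwin : blocScore P 3 3 < blocScore P 3 0 := hW.2 0 (by decide) 3 (by decide)
    refine defeats_of_forall_mem_ballot (k := 3) (a := 0) (by omega) fun v hv => ?_
    have hv : ballot P 3 v = {0, 1, 2} := by rcases hB v with h | h | h <;> simp_all
    exact prefers_of_mem_ballot_of_notMem hP (hv ▸ hw) (hv ▸ hc)
  · have hw' : 1 ≤ w ∧ w ≤ 3 := by revert w; decide
    rcases (show c = 0 ∨ c = 4 by revert c; decide) with rfl | rfl
    · have hwin : blocScore P 3 0 < blocScore P 3 3 := hW.2 3 (by decide) 0 (by decide)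
      refine defeats_of_forall_mem_ballot (k := 3) (a := 3) (by omega) fun v hv => ?_
      have h30 : P v 3 0 := prefers_of_mem_ballot_of_notMem hP hv
        (by rcases hB v with h | h | h <;> simp_all)
      exact hSP.prefers_of_lt_of_le hP (lt_of_lt_of_le (by decide) hw'.1) hw'.2 h30
    · have hwin : blocScore P 3 4 < blocScore P 3 1 := hW.2 1 (by decide) 4 (by decide)
      refine defeats_of_forall_mem_ballot (k := 3) (a := 1) (by omega) fun v hv => ?_
      have h14 : P v 1 4 := prefers_of_mem_ballot_of_notMem hP hv
        (by rcases hB v with h | h | h <;> simp_all)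
      exact hSP.prefers_of_le_of_lt hP hw'.1 (lt_of_le_of_lt hw'.2 (by decide)) h14
  · have hwin : blocScore P 3 1 < blocScore P 3 4 := hW.2 4 (by decide) 1 (by decide)
    refine defeats_of_forall_mem_ballot (k := 3) (a := 4) (by omega) fun v hv => ?_
    have hv : ballot P 3 v = {2, 3, 4} := by rcases hB v with h | h | h <;> simp_all
    exact prefers_of_mem_ballot_of_notMem hP (hv ▸ hw) (hv ▸ hc)

/-- With five candidates and Bloc voting with `k = 3`, any winning set
of the form `{A,B,C}`, `{B,C,D}` or `{C,D,E}` is Gehrlein-stable. -/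
theorem five_candidates_three_winners_gehrlein_stable {N : ℕ}
    (P : Fin N → Fin 5 → Fin 5 → Prop) [∀ v a b, Decidable (P v a b)]
    (hP : StrictPrefs P) (hSP : SinglePeaked P) (hN : Odd N)
    (W : Finset (Fin 5))
    (hform : W = {0, 1, 2} ∨ W = {1, 2, 3} ∨ W = {2, 3, 4})
    (hW : IsWinningSet P 3 W) :
    ∀ w ∈ W, ∀ c ∉ W, Defeats P w c :=
  five_candidates_three_winners_gehrlein_stable_general P hP hSP W hform hW
end

section
/- With five candidates A < B < C < D < E, single-peaked preferences, an odd number of voters, and Bloc voting with k = 2: if the winning set is {A,B}, then neither D nor E majority-defeats B; and if the winning set is {B,D}, then A does not majority-defeat B and E does not majority-defeat D. -/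
/-!
Single-peakedness pins down the top two of every voter in a challenger's camp: a voter preferring
`D` (or `E`) to `B` approves `D` but not `B`, one preferring `A` to `B` approves `A` but not `D`,
and one preferring `E` to `D` approves `E` but not `B`. A majority for the challenger would thus
give a losing candidate more approvals than a winner.
-/

open Finset

section Preferences

variable {m N : ℕ} {P : Fin N → Fin m → Fin m → Prop} {v : Fin N} {a b c : Fin m}

theorem StrictPrefs.irrefl (hP : StrictPrefs P) (v : Fin N) (a : Fin m) : ¬ P v a a :=
  have := hP v; _root_.irrefl a

theorem StrictPrefs.trans (hP : StrictPrefs P) (hab : P v a b) (hbc : P v b c) : P v a c :=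
  have := hP v; _root_.trans hab hbc

theorem StrictPrefs.asymm (hP : StrictPrefs P) (hab : P v a b) : ¬ P v b a :=
  fun hba => hP.irrefl v a (hP.trans hab hba)

theorem StrictPrefs.of_not_prefers (hP : StrictPrefs P) (hne : a ≠ b) (hba : ¬ P v b a) :
    P v a b := by
  have := hP v
  exact (trichotomous_of (P v) a b).resolve_right (not_or_intro hne hba)

theorem SinglePeaked.prefers_mid_of_prefers_right (hP : StrictPrefs P) (hSP : SinglePeaked P)
    {i j k : Fin m} (hij : i < j) (hjk : j < k) (h : P v k i) : P v j i :=
  hP.of_not_prefers hij.ne' fun hij' => hSP v i j k hij hjk ⟨hij', hP.trans h hij'⟩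

theorem SinglePeaked.prefers_mid_of_prefers_left (hP : StrictPrefs P) (hSP : SinglePeaked P)
    {i j k : Fin m} (hij : i < j) (hjk : j < k) (h : P v i k) : P v j k :=
  hP.of_not_prefers hjk.ne fun hkj => hSP v i j k hij hjk ⟨hP.trans h hkj, hkj⟩

theorem SinglePeaked.prefers_right_of_prefers_mid (hP : StrictPrefs P) (hSP : SinglePeaked P)
    {i j k : Fin m} (hij : i < j) (hjk : j < k) (h : P v i j) : P v i k :=
  hP.of_not_prefers (hij.trans hjk).ne fun hki =>
    hP.asymm h (hSP.prefers_mid_of_prefers_right hP hij hjk hki)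

theorem SinglePeaked.prefers_left_of_prefers_mid (hP : StrictPrefs P) (hSP : SinglePeaked P)
    {i j k : Fin m} (hij : i < j) (hjk : j < k) (h : P v k j) : P v k i :=
  hP.of_not_prefers (hij.trans hjk).ne' fun hik =>
    hP.asymm h (hSP.prefers_mid_of_prefers_left hP hij hjk hik)

end Preferences

section Bloc

variable {m N : ℕ} (P : Fin N → Fin m → Fin m → Prop) [∀ v a b, Decidable (P v a b)]
  {v : Fin N} {a : Fin m}

theorem approves_of_forall_not_prefers {k : ℕ} (hk : 0 < k) (h : ∀ x, ¬ P v x a) :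
    Approves P k v a := by
  simpa [Approves, h] using hk

theorem approves_two_of_subsingleton (h : ∀ x y, P v x a → P v y a → x = y) :
    Approves P 2 v a := by
  have : (univ.filter fun b => P v b a).card ≤ 1 :=
    card_le_one.mpr fun x hx y hy => h x y (mem_filter.mp hx).2 (mem_filter.mp hy).2
  unfold Approves
  omega

theorem not_approves_two_of_prefers {x y : Fin m} (hxy : x ≠ y) (hx : P v x a)
    (hy : P v y a) : ¬ Approves P 2 v a := by
  have : 2 ≤ (univ.filter fun b => P v b a).card := by
    rw [← card_pair hxy]
    exact card_le_card (by simp [insert_subset_iff, hx, hy])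
  unfold Approves
  omega

variable {P} {k : ℕ} {x y b : Fin m}

theorem prefCount_le_blocScore (h : ∀ v, P v x y → Approves P k v a) :
    prefCount P x y ≤ blocScore P k a :=
  card_le_card fun v hv => mem_filter.mpr ⟨mem_univ v, h v (mem_filter.mp hv).2⟩

theorem blocScore_add_prefCount_le (h : ∀ v, P v x y → ¬ Approves P k v b) :
    blocScore P k b + prefCount P x y ≤ N := by
  have hsub : univ.filter (fun v => Approves P k v b) ⊆ univ.filter (fun v => ¬ P v x y) :=
    fun v hv => mem_filter.mpr ⟨mem_univ v, fun hxy => h v hxy (mem_filter.mp hv).2⟩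
  calc blocScore P k b + prefCount P x y
      ≤ (univ.filter fun v => ¬ P v x y).card + prefCount P x y :=
        Nat.add_le_add_right (card_le_card hsub) _
    _ = N := by
        rw [add_comm, prefCount, card_filter_add_card_filter_not, card_univ, Fintype.card_fin]

theorem blocScore_lt_of_defeats (h : ∀ v, P v x y → Approves P k v a ∧ ¬ Approves P k v b)
    (hd : Defeats P x y) : blocScore P k b < blocScore P k a := by
  have ha := prefCount_le_blocScore fun v hv => (h v hv).1
  have hb := blocScore_add_prefCount_le fun v hv => (h v hv).2
  unfold Defeats at hd
  omega

theorem IsWinningSet.not_defeats {W : Finset (Fin m)} (hW : IsWinningSet P k W)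
    (ha : a ∉ W) (hb : b ∈ W) (h : ∀ v, P v x y → Approves P k v a ∧ ¬ Approves P k v b) :
    ¬ Defeats P x y := fun hd =>
  (blocScore_lt_of_defeats h hd).not_gt (hW.2 b hb a ha)

end Bloc

section FiveCandidates

variable {N : ℕ} {P : Fin N → Fin 5 → Fin 5 → Prop} [∀ v a b, Decidable (P v a b)] {v : Fin N}

theorem approves_three_not_one_of_prefers_three_one (hP : StrictPrefs P) (hSP : SinglePeaked P)
    (h31 : P v 3 1) :
    Approves P 2 v 3 ∧ ¬ Approves P 2 v 1 := by
  have h21 := hSP.prefers_mid_of_prefers_right hP (j := 2) (by decide) (by decide) h31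
  refine ⟨approves_two_of_subsingleton P fun x y hx hy => ?_,
    not_approves_two_of_prefers P (by decide) h21 h31⟩
  -- only `2` and `4` can be ranked above `3`, and single-peakedness forbids both
  have h03 : ¬ P v 0 3 := fun h03 => hSP v 0 1 3 (by decide) (by decide) ⟨hP.trans h03 h31, h31⟩
  have h13 : ¬ P v 1 3 := hP.asymm h31
  have h33 : ¬ P v 3 3 := hP.irrefl v 3
  have h234 : ¬ (P v 2 3 ∧ P v 4 3) := hSP v 2 3 4 (by decide) (by decide)
  fin_cases x <;> fin_cases y <;> simp_all

theorem approves_three_not_one_of_prefers_four_one (hP : StrictPrefs P) (hSP : SinglePeaked P)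
    (h41 : P v 4 1) : Approves P 2 v 3 ∧ ¬ Approves P 2 v 1 :=
  approves_three_not_one_of_prefers_three_one hP hSP
    (hSP.prefers_mid_of_prefers_right hP (j := 3) (by decide) (by decide) h41)

theorem approves_zero_not_three_of_prefers_zero_one (hP : StrictPrefs P) (hSP : SinglePeaked P)
    (h01 : P v 0 1) : Approves P 2 v 0 ∧ ¬ Approves P 2 v 3 := by
  have h02 := hSP.prefers_right_of_prefers_mid hP (k := 2) (by decide) (by decide) h01
  have h03 := hSP.prefers_right_of_prefers_mid hP (k := 3) (by decide) (by decide) h02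
  have h04 := hSP.prefers_right_of_prefers_mid hP (k := 4) (by decide) (by decide) h03
  have h13 := hSP.prefers_mid_of_prefers_left hP (j := 1) (by decide) (by decide) h03
  have h23 := hSP.prefers_mid_of_prefers_left hP (j := 2) (by decide) (by decide) h03
  refine ⟨approves_of_forall_not_prefers P two_pos fun x => ?_,
    not_approves_two_of_prefers P (by decide) h13 h23⟩
  fin_cases x
  exacts [hP.irrefl v 0, hP.asymm h01, hP.asymm h02, hP.asymm h03, hP.asymm h04]

theorem approves_four_not_one_of_prefers_four_three (hP : StrictPrefs P) (hSP : SinglePeaked P)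
    (h43 : P v 4 3) : Approves P 2 v 4 ∧ ¬ Approves P 2 v 1 := by
  have h42 := hSP.prefers_left_of_prefers_mid hP (i := 2) (by decide) (by decide) h43
  have h41 := hSP.prefers_left_of_prefers_mid hP (i := 1) (by decide) (by decide) h42
  have h40 := hSP.prefers_left_of_prefers_mid hP (i := 0) (by decide) (by decide) h41
  have h21 := hSP.prefers_mid_of_prefers_right hP (j := 2) (by decide) (by decide) h41
  have h31 := hSP.prefers_mid_of_prefers_right hP (j := 3) (by decide) (by decide) h41
  refine ⟨approves_of_forall_not_prefers P two_pos fun x => ?_,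
    not_approves_two_of_prefers P (by decide) h21 h31⟩
  fin_cases x
  exacts [hP.asymm h40, hP.asymm h41, hP.asymm h42, hP.asymm h43, hP.irrefl v 4]

end FiveCandidates

theorem five_candidates_AB_BD_partial_stability_general {N : ℕ}
    (P : Fin N → Fin 5 → Fin 5 → Prop) [∀ v a b, Decidable (P v a b)]
    (hP : StrictPrefs P) (hSP : SinglePeaked P) :
    (IsWinningSet P 2 ({0, 1} : Finset (Fin 5)) →
      ¬ Defeats P 3 1 ∧ ¬ Defeats P 4 1) ∧
    (IsWinningSet P 2 ({1, 3} : Finset (Fin 5)) →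
      ¬ Defeats P 0 1 ∧ ¬ Defeats P 4 3) :=
  ⟨fun hW => ⟨hW.not_defeats (by decide) (by decide)
      fun _ => approves_three_not_one_of_prefers_three_one hP hSP,
    hW.not_defeats (by decide) (by decide)
      fun _ => approves_three_not_one_of_prefers_four_one hP hSP⟩,
  fun hW => ⟨hW.not_defeats (by decide) (by decide)
      fun _ => approves_zero_not_three_of_prefers_zero_one hP hSP,
    hW.not_defeats (by decide) (by decide)
      fun _ => approves_four_not_one_of_prefers_four_three hP hSP⟩⟩

/-- With five candidates `A,B,C,D,E` (indices `0,...,4`) and Bloc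
voting with `k = 2`: if the winning set is `{A,B}` then neither `D` nor `E`
majority-defeats `B`; if the winning set is `{B,D}` then `A` does not
majority-defeat `B` and `E` does not majority-defeat `D`. -/
theorem five_candidates_AB_BD_partial_stability {N : ℕ}
    (P : Fin N → Fin 5 → Fin 5 → Prop) [∀ v a b, Decidable (P v a b)]
    (hP : StrictPrefs P) (hSP : SinglePeaked P) (hN : Odd N) :
    (IsWinningSet P 2 ({0, 1} : Finset (Fin 5)) →
      ¬ Defeats P 3 1 ∧ ¬ Defeats P 4 1) ∧
    (IsWinningSet P 2 ({1, 3} : Finset (Fin 5)) →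
      ¬ Defeats P 0 1 ∧ ¬ Defeats P 4 3) :=
  five_candidates_AB_BD_partial_stability_general P hP hSP
end
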